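/- arXiv:2409.02209 — 4 statements merged into one kernel-verified Lean document; each statement's English description precedes it below -/
import Mathlib

section
/- For every real t, the product of the Kaplan–Meier estimator of the failure-time survival function and the Kaplan–Meier estimator of the censoring survival function equals the empirical survival function of the observation times: Ŝ(t) · Ĝ(t) = #{i : x_i > t} / n. -/
/-!
Since the observation times are distinct, the failures and the censorings up to `t` together
are exactly the observations `x_i ≤ t`, and their numbers at risk are the consecutive integers
`c + 1, …, n`, where `c = #{i : x_i > t}`. The product of the factors `1 - 1/m = (m - 1)/m` over
`m = c + 1, …, n` telescopes to `c / n`.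
-/

open Finset

/-- Number at risk at time `u`: `Y(u) = #{j : x_j ≥ u}`. -/
noncomputable def atRisk {n : ℕ} (x : Fin n → ℝ) (u : ℝ) : ℕ :=
  (univ.filter fun j => u ≤ x j).card

/-- Kaplan–Meier estimator of the failure-time survival function:
`Ŝ(t) = ∏_{i : x_i ≤ t, δ_i = 1} (1 − 1/Y(x_i))`. -/
noncomputable def kmS {n : ℕ} (x : Fin n → ℝ) (δ : Fin n → Bool) (t : ℝ) : ℝ :=
  ∏ i ∈ univ.filter (fun i => x i ≤ t ∧ δ i = true), (1 - 1 / (atRisk x (x i) : ℝ))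

/-- Kaplan–Meier estimator of the censoring survival function:
`Ĝ(t) = ∏_{i : x_i ≤ t, δ_i = 0} (1 − 1/Y(x_i))`. -/
noncomputable def kmG {n : ℕ} (x : Fin n → ℝ) (δ : Fin n → Bool) (t : ℝ) : ℝ :=
  ∏ i ∈ univ.filter (fun i => x i ≤ t ∧ δ i = false), (1 - 1 / (atRisk x (x i) : ℝ))

theorem natCast_mul_prod_Ioc_one_sub_one_div {k N : ℕ} (hkN : k ≤ N) :
    (N : ℝ) * ∏ m ∈ Ioc k N, (1 - 1 / (m : ℝ)) = k := by
  induction N, hkN using Nat.le_induction with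
  | base => simp
  | succ N hkN ih =>
    rw [prod_Ioc_succ_top hkN, ← ih]
    push_cast
    field_simp
    ring

section AtRisk

variable {n : ℕ} (x : Fin n → ℝ)

theorem atRisk_le (u : ℝ) : atRisk x u ≤ n :=
  (card_filter_le _ _).trans_eq (card_fin n)

variable {x}

theorem card_lt_atRisk {s : Finset (Fin n)} {i : Fin n} (hs : ∀ j ∈ s, x i ≤ x j) (hi : i ∉ s) :
    s.card < atRisk x (x i) := by
  have hsub : s ⊆ univ.filter fun j => x i ≤ x j := fun j hj => by simpa using hs j hj
  exact card_lt_card <| (ssubset_iff_of_subset hsub).2 ⟨i, by simp, hi⟩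

theorem atRisk_lt_atRisk {i j : Fin n} (h : x i < x j) : atRisk x (x j) < atRisk x (x i) :=
  card_lt_atRisk (fun k hk => h.le.trans (mem_filter.1 hk).2) (by simpa using h)

theorem injective_atRisk (hinj : Function.Injective x) :
    Function.Injective fun i => atRisk x (x i) := by
  intro i j hij
  by_contra hne
  rcases (hinj.ne hne).lt_or_gt with h | h
  · exact (atRisk_lt_atRisk h).ne hij.symm
  · exact (atRisk_lt_atRisk h).ne hij

theorem image_atRisk_filter_le (hinj : Function.Injective x) (t : ℝ) :
    (univ.filter fun i => x i ≤ t).image (fun i => atRisk x (x i))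
      = Ioc (univ.filter fun i => t < x i).card n := by
  refine eq_of_subset_of_card_le (fun m hm => ?_) ?_
  · obtain ⟨i, hi, rfl⟩ := mem_image.1 hm
    have hit : x i ≤ t := (mem_filter.1 hi).2
    refine mem_Ioc.2 ⟨card_lt_atRisk (fun j hj => hit.trans (mem_filter.1 hj).2.le) ?_,
      atRisk_le x _⟩
    simpa using hit
  · have hsplit := card_filter_add_card_filter_not (s := univ) (fun i => x i ≤ t)
    simp only [card_univ, Fintype.card_fin, not_le] at hsplit
    rw [card_image_of_injective _ (injective_atRisk hinj), Nat.card_Ioc]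
    omega

end AtRisk

theorem kmS_mul_kmG {n : ℕ} (x : Fin n → ℝ) (δ : Fin n → Bool) (t : ℝ) :
    kmS x δ t * kmG x δ t
      = ∏ i ∈ univ.filter (fun i => x i ≤ t), (1 - 1 / (atRisk x (x i) : ℝ)) := by
  simp only [kmS, kmG, ← filter_filter, Bool.eq_false_iff, ne_eq]
  exact prod_filter_mul_prod_filter_not _ _ _

theorem km_product_eq_empirical_general {n : ℕ} (hn : 0 < n)
    (x : Fin n → ℝ) (δ : Fin n → Bool)
    (hinj : Function.Injective x) :
    ∀ t : ℝ, kmS x δ t * kmG x δ t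
      = ((univ.filter fun i => t < x i).card : ℝ) / n := by
  intro t
  have hc : (univ.filter fun i => t < x i).card ≤ n := (card_filter_le _ _).trans_eq (card_fin n)
  rw [kmS_mul_kmG, ← prod_image (f := fun m : ℕ => 1 - 1 / (m : ℝ))
      (fun i _ j _ h => injective_atRisk hinj h),
    image_atRisk_filter_le hinj, eq_div_iff (by positivity), mul_comm]
  exact natCast_mul_prod_Ioc_one_sub_one_div hc

/-- **The product of the two Kaplan–Meier estimators is the empirical survival
function of the observation times:** `Ŝ(t) · Ĝ(t) = #{i : x_i > t} / n`. -/
theorem km_product_eq_empirical {n : ℕ} (hn : 0 < n)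
    (x : Fin n → ℝ) (δ : Fin n → Bool)
    (hpos : ∀ i, 0 < x i) (hinj : Function.Injective x) :
    ∀ t : ℝ, kmS x δ t * kmG x δ t
      = ((univ.filter fun i => t < x i).card : ℝ) / n :=
  km_product_eq_empirical_general hn x δ hinj
end

section
/- The Kaplan–Meier estimator admits the inverse-probability-of-censoring-weighted (IPCW) representation: for every real t, 1 − Ŝ(t) = (1/n) Σ_{i : δ_i = 1, x_i ≤ t} 1/Ĝ(x_i−), where each term is well defined because Ĝ(x_i−) > 0 for every i. -/
/-!
A factor `1 − 1/Y(x_j)` with `x_j < x_i` is positive because both `j` and `i` are at risk at `x_j`,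
so `Ĝ(x_i−) > 0`. Since the observation times are distinct, `Y(x_j) − 1` is the number at risk at
the observation following `x_j`, so the factors `(Y(x_j) − 1)/Y(x_j)` over all `x_j < u` multiply to
`Y(u)/n`; splitting them according to `δ_j` gives `n Ŝ(u−) Ĝ(u−) = Y(u)`. On the other hand,
`1 − ∏ (1 − a_i) = Σ a_i ∏_{j < i} (1 − a_j)` writes `1 − Ŝ(t)` as the sum of `Ŝ(x_i−)/Y(x_i)`
over the failures `x_i ≤ t`, and each summand equals `1/(n Ĝ(x_i−))`.
-/

open Finset

/-- Left limit of the Kaplan–Meier estimator of the censoring survival function: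
`Ĝ(t−) = ∏_{i : x_i < t, δ_i = 0} (1 − 1/Y(x_i))`. -/
noncomputable def kmGminus {n : ℕ} (x : Fin n → ℝ) (δ : Fin n → Bool) (t : ℝ) : ℝ :=
  ∏ i ∈ univ.filter (fun i => x i < t ∧ δ i = false), (1 - 1 / (atRisk x (x i) : ℝ))

theorem Finset.prod_one_sub_ordered_of_injOn {ι α R : Type*} [LinearOrder α] [CommRing R]
    (s : Finset ι) {x : ι → α} (hx : Set.InjOn x s) (g : α → R) :
    ∏ i ∈ s, (1 - g (x i)) = 1 - ∑ i ∈ s, g (x i) * ∏ j ∈ s with x j < x i, (1 - g (x j)) := by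
  rw [← prod_image (f := fun u => 1 - g u) hx, prod_one_sub_ordered, sum_image hx]
  congr 1
  refine sum_congr rfl fun i _ => ?_
  rw [filter_image, prod_image (hx.mono (coe_subset.mpr (filter_subset _ _)))]

section KaplanMeier

variable {n : ℕ} (x : Fin n → ℝ)

noncomputable def kmSminus (δ : Fin n → Bool) (t : ℝ) : ℝ :=
  ∏ i ∈ univ.filter (fun i => x i < t ∧ δ i = true), (1 - 1 / (atRisk x (x i) : ℝ))

theorem atRisk_eq_sub_card_lt (u : ℝ) : (atRisk x u : ℝ) = n - #{j | x j < u} := by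
  rw [eq_sub_iff_add_eq']
  exact_mod_cast by simpa [atRisk] using card_filter_add_card_filter_not (s := univ) (x · < u)

theorem atRisk_pos (m : Fin n) : 0 < atRisk x (x m) :=
  card_pos.mpr ⟨m, by simp⟩

theorem one_lt_atRisk {j m : Fin n} (h : x j < x m) : 1 < atRisk x (x j) :=
  one_lt_card.mpr ⟨j, by simp, m, by simp [h.le], fun e => h.ne (e ▸ rfl)⟩

theorem one_sub_inv_atRisk_pos {j m : Fin n} (h : x j < x m) :
    0 < 1 - 1 / (atRisk x (x j) : ℝ) := by
  have : (1 : ℝ) < atRisk x (x j) := by exact_mod_cast one_lt_atRisk x h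
  rw [sub_pos, div_lt_one (by linarith)]
  exact this

theorem mul_prod_one_sub_inv_atRisk_of_lowerClosed (hinj : Function.Injective x)
    (s : Finset (Fin n)) (hs : ∀ i ∈ s, ∀ j, x j < x i → j ∈ s) :
    (n : ℝ) * ∏ i ∈ s, (1 - 1 / (atRisk x (x i) : ℝ)) = n - #s := by
  induction s using induction_on_max_value x with
  | empty => simp
  | insert a s ha hmax ih =>
    have below_a : ({j | x j < x a} : Finset (Fin n)) = s := by
      ext j
      simp only [mem_filter, mem_univ, true_and]
      refine ⟨fun h => (mem_insert.mp (hs a (mem_insert_self a s) j h)).resolve_left ?_,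
        fun hj => (hmax j hj).lt_of_ne fun e => ?_⟩
      · rintro rfl; exact h.false
      · exact ha (hinj e ▸ hj)
    have hY : (atRisk x (x a) : ℝ) = n - #s := by rw [atRisk_eq_sub_card_lt, below_a]
    have hY0 : (atRisk x (x a) : ℝ) ≠ 0 := by exact_mod_cast (atRisk_pos x a).ne'
    have hs' : ∀ i ∈ s, ∀ j, x j < x i → j ∈ s := fun i hi j hj => by
      simpa [← below_a] using hj.trans_le (hmax i hi)
    rw [prod_insert ha, mul_left_comm, ih hs', card_insert_of_notMem ha, ← hY]
    field_simp
    push_cast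
    linear_combination hY

theorem mul_prod_lt_one_sub_inv_atRisk (hinj : Function.Injective x) (u : ℝ) :
    (n : ℝ) * ∏ j ∈ univ.filter (fun j => x j < u), (1 - 1 / (atRisk x (x j) : ℝ))
      = atRisk x u := by
  rw [mul_prod_one_sub_inv_atRisk_of_lowerClosed x hinj _ fun i hi _ hj => by
    simp only [mem_filter, mem_univ, true_and] at hi ⊢; exact hj.trans hi]
  exact (atRisk_eq_sub_card_lt x u).symm

theorem mul_kmSminus_mul_kmGminus (hinj : Function.Injective x) (δ : Fin n → Bool) (u : ℝ) :
    (n : ℝ) * (kmSminus x δ u * kmGminus x δ u) = atRisk x u := by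
  rw [← mul_prod_lt_one_sub_inv_atRisk x hinj u,
    ← prod_filter_mul_prod_filter_not _ (fun j => δ j = true), filter_filter, filter_filter]
  simp only [kmSminus, kmGminus, Bool.not_eq_true]

theorem kmGminus_pos (δ : Fin n → Bool) (m : Fin n) : 0 < kmGminus x δ (x m) :=
  prod_pos fun _ hj => one_sub_inv_atRisk_pos x (mem_filter.mp hj).2.1

theorem one_sub_kmS (hinj : Function.Injective x) (δ : Fin n → Bool) (t : ℝ) :
    1 - kmS x δ t = ∑ i ∈ univ.filter (fun i => x i ≤ t ∧ δ i = true),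
      1 / (atRisk x (x i) : ℝ) * kmSminus x δ (x i) := by
  rw [kmS, prod_one_sub_ordered_of_injOn _ hinj.injOn (fun u => 1 / (atRisk x u : ℝ)),
    sub_sub_cancel]
  refine sum_congr rfl fun i hi => ?_
  rw [kmSminus, filter_filter]
  congr 2
  ext j
  simp only [mem_filter, mem_univ, true_and] at hi ⊢
  constructor
  · rintro ⟨⟨-, hj⟩, hji⟩; exact ⟨hji, hj⟩
  · rintro ⟨hji, hj⟩; exact ⟨⟨hji.le.trans hi.1, hj⟩, hji⟩

end KaplanMeier

theorem km_ipcw_representation_general {n : ℕ}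
    (x : Fin n → ℝ) (δ : Fin n → Bool)
    (hinj : Function.Injective x) :
    (∀ i, 0 < kmGminus x δ (x i)) ∧
    (∀ t : ℝ, 1 - kmS x δ t
      = (1 / n) * ∑ i ∈ univ.filter (fun i => δ i = true ∧ x i ≤ t),
          1 / kmGminus x δ (x i)) := by
  refine ⟨kmGminus_pos x δ, fun t => ?_⟩
  rw [one_sub_kmS x hinj, mul_sum]
  refine sum_congr (filter_congr fun i _ => and_comm) fun i _ => ?_
  have hn : (n : ℝ) ≠ 0 := Nat.cast_ne_zero.mpr (Fin.pos i).ne'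
  have hG := (kmGminus_pos x δ i).ne'
  have hY : (atRisk x (x i) : ℝ) ≠ 0 := by exact_mod_cast (atRisk_pos x i).ne'
  have key := mul_kmSminus_mul_kmGminus x hinj δ (x i)
  field_simp
  linear_combination key

/-- **IPCW representation of the Kaplan–Meier estimator:** `Ĝ(x_i−) > 0` for every `i`
(so each summand is well defined) and, for every real `t`,
`1 − Ŝ(t) = (1/n) Σ_{i : δ_i = 1, x_i ≤ t} 1/Ĝ(x_i−)`. -/
theorem km_ipcw_representation {n : ℕ} (hn : 0 < n)
    (x : Fin n → ℝ) (δ : Fin n → Bool)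
    (hpos : ∀ i, 0 < x i) (hinj : Function.Injective x) :
    (∀ i, 0 < kmGminus x δ (x i)) ∧
    (∀ t : ℝ, 1 - kmS x δ t
      = (1 / n) * ∑ i ∈ univ.filter (fun i => δ i = true ∧ x i ≤ t),
          1 / kmGminus x δ (x i)) :=
  km_ipcw_representation_general x δ hinj
end

section
/- The tau process admits the probabilistic representation τ(t) = P(T_0 < min(T_1, t)) − P(T_1 < min(T_0, t)) for every real t ≥ 0. -/
/-!
Conditioning on `T₀ = u` and using independence,
`P(T₀ < min(T₁, t)) = ∫_{[0,t)} P(T₁ > u) dν₀(u)`, and `P(T₁ > u) = S₁(u)` for finite `u`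
because the cured part of group 1 sits at `T₁ = ∞`. As `ν₀` has no atoms, `[0,t)` may be
replaced by `[0,t]`; the other term is the same statement with the groups exchanged.
-/

open MeasureTheory ProbabilityTheory
open scoped ENNReal

lemma measure_lt_min_eq_setLIntegral_Iio {Ω α : Type*} [MeasurableSpace Ω] [MeasurableSpace α]
    [LinearOrder α] [TopologicalSpace α] [OrderClosedTopology α] [SecondCountableTopology α]
    [OpensMeasurableSpace α] (P : Measure Ω) [IsFiniteMeasure P] {X Y : Ω → α}
    (hX : Measurable X) (hY : Measurable Y) (hXY : IndepFun X Y P) (c : α) :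
    P {ω | X ω < min (Y ω) c} = ∫⁻ x in Set.Iio c, P (Y ⁻¹' Set.Ioi x) ∂(P.map X) := by
  have hS : MeasurableSet {p : α × α | p.1 < min p.2 c} :=
    measurableSet_lt measurable_fst (measurable_snd.min measurable_const)
  have hsection : ∀ x, P.map Y (Prod.mk x ⁻¹' {p : α × α | p.1 < min p.2 c})
      = (Set.Iio c).indicator (fun x ↦ P (Y ⁻¹' Set.Ioi x)) x := by
    intro x
    by_cases hx : x < c
    · rw [Set.indicator_of_mem (Set.mem_Iio.2 hx), ← Measure.map_apply hY measurableSet_Ioi]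
      congr 1
      ext y
      simp [hx]
    · rw [Set.indicator_of_notMem (mt Set.mem_Iio.1 hx)]
      convert measure_empty (μ := P.map Y)
      ext y
      simp [hx]
  rw [← lintegral_indicator measurableSet_Iio, ← funext hsection, ← Measure.prod_apply hS,
    ← (indepFun_iff_map_prod_eq_prod_map_map hX.aemeasurable hY.aemeasurable).1 hXY,
    Measure.map_apply (hX.prodMk hY) hS]
  rfl

lemma map_restrict_eq_of_top_notMem {Ω : Type*} [MeasurableSpace Ω] {P : Measure Ω}
    {T : Ω → ℝ≥0∞} (hT : Measurable T) {ν : Measure ℝ≥0∞}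
    (hlaw : ∀ A : Set ℝ≥0∞, MeasurableSet A → ⊤ ∉ A → P (T ⁻¹' A) = ν A)
    {s : Set ℝ≥0∞} (hs : MeasurableSet s) (htop : ⊤ ∉ s) :
    (P.map T).restrict s = ν.restrict s := by
  ext A hA
  rw [Measure.restrict_apply hA, Measure.restrict_apply hA, Measure.map_apply hT (hA.inter hs),
    hlaw _ (hA.inter hs) fun h ↦ htop h.2]

noncomputable def survival (η : ℝ) (μ : Measure ℝ≥0∞) (u : ℝ≥0∞) : ℝ≥0∞ :=
  ENNReal.ofReal (1 - η) * μ (Set.Ioi u) + ENNReal.ofReal η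

namespace survival

variable {η : ℝ} {μ : Measure ℝ≥0∞}

lemma antitone : Antitone (survival η μ) := fun _ _ hxy ↦
  add_le_add_left (mul_le_mul_right (measure_mono (Set.Ioi_subset_Ioi hxy)) _) _

lemma ne_top [IsFiniteMeasure μ] (u : ℝ≥0∞) : survival η μ u ≠ ⊤ :=
  ENNReal.add_ne_top.2 ⟨ENNReal.mul_ne_top ENNReal.ofReal_ne_top (measure_ne_top μ _),
    ENNReal.ofReal_ne_top⟩

lemma toReal_eq [IsFiniteMeasure μ] (hη : 0 ≤ η) (hη' : η ≤ 1) (u : ℝ≥0∞) :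
    (survival η μ u).toReal = (1 - η) * (μ (Set.Ioi u)).toReal + η := by
  rw [survival, ENNReal.toReal_add (ENNReal.mul_ne_top ENNReal.ofReal_ne_top (measure_ne_top μ _))
    ENNReal.ofReal_ne_top, ENNReal.toReal_mul, ENNReal.toReal_ofReal (by linarith),
    ENNReal.toReal_ofReal hη]

end survival

lemma measure_preimage_Ioi_eq_survival {Ω : Type*} [MeasurableSpace Ω] {P : Measure Ω}
    {T : Ω → ℝ≥0∞} (hT : Measurable T) {η : ℝ} {μ : Measure ℝ≥0∞} (htop : μ {⊤} = 0)
    (hlaw : ∀ A : Set ℝ≥0∞, MeasurableSet A → ⊤ ∉ A →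
      P (T ⁻¹' A) = ENNReal.ofReal (1 - η) * μ A)
    (htail : P {ω | T ω = ⊤} = ENNReal.ofReal η) {x : ℝ≥0∞} (hx : x ≠ ⊤) :
    P (T ⁻¹' Set.Ioi x) = survival η μ x := by
  have hfinite : MeasurableSet (Set.Ioi x \ {⊤}) :=
    measurableSet_Ioi.diff (measurableSet_singleton _)
  change P (T ⁻¹' {⊤}) = _ at htail
  rw [survival, ← measure_sdiff_null htop, ← hlaw _ hfinite (fun h ↦ h.2 rfl), ← htail,
    ← measure_union (Set.disjoint_sdiff_left.preimage T) (hT (measurableSet_singleton _)),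
    ← Set.preimage_union, Set.sdiff_union_of_subset
      (Set.singleton_subset_iff.2 (Set.mem_Ioi.2 hx.lt_top))]

lemma setIntegral_survival_eq_measure_lt_min {Ω : Type*} [MeasurableSpace Ω] (P : Measure Ω)
    [IsFiniteMeasure P] {ηa ηb : ℝ} (hηb : 0 ≤ ηb) (hηb' : ηb ≤ 1) {μa μb : Measure ℝ≥0∞}
    [NullSingletonClass μa] [IsFiniteMeasure μb] (htopb : μb {⊤} = 0)
    {Ta Tb : Ω → ℝ≥0∞} (hTa : Measurable Ta) (hTb : Measurable Tb) (hindep : IndepFun Ta Tb P)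
    (hlawa : ∀ A : Set ℝ≥0∞, MeasurableSet A → ⊤ ∉ A →
      P (Ta ⁻¹' A) = ENNReal.ofReal (1 - ηa) * μa A)
    (hlawb : ∀ A : Set ℝ≥0∞, MeasurableSet A → ⊤ ∉ A →
      P (Tb ⁻¹' A) = ENNReal.ofReal (1 - ηb) * μb A)
    (htailb : P {ω | Tb ω = ⊤} = ENNReal.ofReal ηb) (c : ℝ≥0∞) :
    ∫ u in Set.Icc 0 c, ((1 - ηb) * (μb (Set.Ioi u)).toReal + ηb) ∂(ENNReal.ofReal (1 - ηa) • μa)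
      = (P {ω | Ta ω < min (Tb ω) c}).toReal := by
  set νa := ENNReal.ofReal (1 - ηa) • μa
  have hlawa' : ∀ A : Set ℝ≥0∞, MeasurableSet A → ⊤ ∉ A → P (Ta ⁻¹' A) = νa A := by
    simpa [νa] using hlawa
  have : NullSingletonClass νa := ⟨fun x ↦ by simp [νa]⟩
  calc ∫ u in Set.Icc 0 c, ((1 - ηb) * (μb (Set.Ioi u)).toReal + ηb) ∂νa
      = ∫ u in Set.Iic c, (survival ηb μb u).toReal ∂νa := by
        simp only [survival.toReal_eq hηb hηb', ← bot_eq_zero, Set.Icc_bot]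
    _ = (∫⁻ u in Set.Iic c, survival ηb μb u ∂νa).toReal :=
        integral_toReal survival.antitone.measurable.aemeasurable
          (ae_of_all _ fun u ↦ (survival.ne_top u).lt_top)
    _ = (∫⁻ u in Set.Iio c, survival ηb μb u ∂(P.map Ta)).toReal := by
        rw [Measure.restrict_congr_set Iio_ae_eq_Iic.symm,
          map_restrict_eq_of_top_notMem hTa hlawa' measurableSet_Iio
            fun h ↦ not_top_lt (Set.mem_Iio.1 h)]
    _ = (∫⁻ u in Set.Iio c, P (Tb ⁻¹' Set.Ioi u) ∂(P.map Ta)).toReal := by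
        congr 1
        refine setLIntegral_congr_fun measurableSet_Iio fun u hu ↦ ?_
        exact (measure_preimage_Ioi_eq_survival hTb htopb hlawb htailb (hu.trans_le le_top).ne).symm
    _ = (P {ω | Ta ω < min (Tb ω) c}).toReal := by
        rw [measure_lt_min_eq_setLIntegral_Iio P hTa hTb hindep]

/-- **Probabilistic representation of the tau process.** For `ℓ = 0,1` let
`η_ℓ ∈ [0,1)` and `μ_ℓ` be an atomless Borel probability measure on `[0,∞)`
(modelled on `[0,∞]` with `μ_ℓ {∞} = 0`); set `ν_ℓ = (1 − η_ℓ)μ_ℓ` and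
`S_ℓ(u) = (1 − η_ℓ)μ_ℓ((u,∞)) + η_ℓ`. Let `T_0, T_1 : Ω → [0,∞]` be independent
with `P(T_ℓ ∈ A) = ν_ℓ(A)` for Borel `A ⊆ [0,∞)` and `P(T_ℓ = ∞) = η_ℓ`. Then
for every `t ≥ 0`,
`τ(t) = ∫_{[0,t]} S_1 dν_0 − ∫_{[0,t]} S_0 dν_1
      = P(T_0 < min(T_1,t)) − P(T_1 < min(T_0,t))`. -/
theorem tau_probabilistic_representation
    {Ω : Type*} [MeasureSpace Ω] [IsProbabilityMeasure (ℙ : Measure Ω)]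
    (η0 η1 : ℝ) (hη0 : 0 ≤ η0) (hη0' : η0 < 1) (hη1 : 0 ≤ η1) (hη1' : η1 < 1)
    (μ0 μ1 : Measure ℝ≥0∞) [IsProbabilityMeasure μ0] [IsProbabilityMeasure μ1]
    [NullSingletonClass μ0] [NullSingletonClass μ1] (htop0 : μ0 {⊤} = 0) (htop1 : μ1 {⊤} = 0)
    (T0 T1 : Ω → ℝ≥0∞) (hT0 : Measurable T0) (hT1 : Measurable T1)
    (hindep : IndepFun T0 T1 ℙ)
    (hlaw0 : ∀ A : Set ℝ≥0∞, MeasurableSet A → ⊤ ∉ A →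
      ℙ (T0 ⁻¹' A) = ENNReal.ofReal (1 - η0) * μ0 A)
    (hlaw1 : ∀ A : Set ℝ≥0∞, MeasurableSet A → ⊤ ∉ A →
      ℙ (T1 ⁻¹' A) = ENNReal.ofReal (1 - η1) * μ1 A)
    (htail0 : ℙ {ω | T0 ω = ⊤} = ENNReal.ofReal η0)
    (htail1 : ℙ {ω | T1 ω = ⊤} = ENNReal.ofReal η1) :
    ∀ t : ℝ, 0 ≤ t →
      (∫ u in Set.Icc 0 (ENNReal.ofReal t),
          ((1 - η1) * (μ1 (Set.Ioi u)).toReal + η1) ∂(ENNReal.ofReal (1 - η0) • μ0))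
        - (∫ u in Set.Icc 0 (ENNReal.ofReal t),
            ((1 - η0) * (μ0 (Set.Ioi u)).toReal + η0) ∂(ENNReal.ofReal (1 - η1) • μ1))
      = (ℙ {ω | T0 ω < min (T1 ω) (ENNReal.ofReal t)}).toReal
        - (ℙ {ω | T1 ω < min (T0 ω) (ENNReal.ofReal t)}).toReal := by
  intro t _
  rw [setIntegral_survival_eq_measure_lt_min ℙ hη1 hη1'.le htop1 hT0 hT1 hindep hlaw0 hlaw1 htail1,
    setIntegral_survival_eq_measure_lt_min ℙ hη0 hη0'.le htop0 hT1 hT0 hindep.symm hlaw1 hlaw0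
      htail0]
end

section
/- The susceptible tau process admits the probabilistic representation τ_a(t) = [(P(T_0 < min(T_1, t)) − η_1 F_0(t)) − (P(T_1 < min(T_0, t)) − η_0 F_1(t))] / [(1 − η_0)(1 − η_1)] for every real t ≥ 0, where F_ℓ(t) = P(T_ℓ ≤ t). -/
open MeasureTheory ProbabilityTheory
open scoped ENNReal

/-!
Independence makes the joint law of `(T₀, T₁)` the product of the marginal laws, and each
marginal is `(1 - η) μ + η δ_∞`. Integrating `P(T₁ > u)` against the law of `T₀` over `u < t`
therefore gives
`P(T₀ < min(T₁, t)) = (1 - η₀)(1 - η₁) ∫_{[0,t)} S_{a,1} dμ₀ + (1 - η₀) η₁ μ₀([0,t))`,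
where the cured mass of `T₁` contributes the second term and that of `T₀` contributes nothing.
Since `F₀(t) = (1 - η₀) μ₀([0,t])` and `μ₀` has no atoms, solving for the integral and
subtracting the symmetric identity gives the representation.
-/

open Set

section

variable {Ω α : Type*} [MeasurableSpace Ω] [MeasurableSpace α] {P : Measure Ω}

theorem map_eq_smul_add_smul_dirac [MeasurableSingletonClass α] {T : Ω → α} (hT : Measurable T)
    {μ : Measure α} {x : α} (hx : μ {x} = 0) {a b : ℝ≥0∞}
    (hlaw : ∀ A : Set α, MeasurableSet A → x ∉ A → P (T ⁻¹' A) = a * μ A)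
    (htail : P {ω | T ω = x} = b) :
    P.map T = a • μ + b • Measure.dirac x := by
  ext A hA
  have hsplit : P (T ⁻¹' A) = a * μ (A \ {x}) + P (T ⁻¹' (A ∩ {x})) := by
    rw [← hlaw _ (hA.diff (measurableSet_singleton x)) (fun h => h.2 rfl), preimage_sdiff,
      preimage_inter, measure_sdiff_add_inter _ (hT (measurableSet_singleton x))]
  rw [Measure.map_apply hT hA, hsplit, measure_sdiff_null hx]
  by_cases hxA : x ∈ A
  · simp [inter_singleton_of_mem hxA, htail, hxA, preimage, Measure.dirac_apply_of_mem]
  · simp [inter_singleton_of_notMem hxA, hxA, Measure.dirac_apply' _ hA]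

theorem measure_lt_min_eq_setLIntegral [IsFiniteMeasure P] [LinearOrder α] [TopologicalSpace α]
    [OrderClosedTopology α] [SecondCountableTopology α] [OpensMeasurableSpace α]
    {X Y : Ω → α} (hX : Measurable X) (hY : Measurable Y) (hXY : IndepFun X Y P) (s : α) :
    P {ω | X ω < min (Y ω) s} = ∫⁻ u in Iio s, P.map Y (Ioi u) ∂(P.map X) := by
  have hS : MeasurableSet {p : α × α | p.1 < p.2 ∧ p.1 < s} :=
    (measurableSet_lt measurable_fst measurable_snd).inter (measurable_fst measurableSet_Iio)
  calc P {ω | X ω < min (Y ω) s}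
      = P.map (fun ω => (X ω, Y ω)) {p | p.1 < p.2 ∧ p.1 < s} := by
        rw [Measure.map_apply (hX.prodMk hY) hS]
        simp only [preimage_ofPred_eq, lt_min_iff]
    _ = ((P.map X).prod (P.map Y)) {p | p.1 < p.2 ∧ p.1 < s} := by
        rw [(indepFun_iff_map_prod_eq_prod_map_map hX.aemeasurable hY.aemeasurable).mp hXY]
    _ = _ := by
        rw [Measure.prod_apply hS, ← lintegral_indicator measurableSet_Iio]
        congr with u
        by_cases hu : u < s <;> simp [hu, Ioi]

end

section

variable {α : Type*} [MeasurableSpace α] [LinearOrder α] [OrderTop α] [TopologicalSpace α]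
  [OrderClosedTopology α] [OpensMeasurableSpace α]

theorem setLIntegral_Iio_smul_add_smul_dirac_top (μ₀ μ₁ : Measure α) {a₁ : ℝ≥0∞}
    (ha₁ : a₁ ≠ ∞) (a₀ b₀ b₁ : ℝ≥0∞) (s : α) :
    ∫⁻ u in Iio s, (a₁ • μ₁ + b₁ • Measure.dirac ⊤ : Measure α) (Ioi u)
        ∂(a₀ • μ₀ + b₀ • Measure.dirac ⊤)
      = a₀ * a₁ * ∫⁻ u in Iio s, μ₁ (Ioi u) ∂μ₀ + a₀ * b₁ * μ₀ (Iio s) := by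
  have hinner : ∀ u ∈ Iio s,
      (a₁ • μ₁ + b₁ • Measure.dirac ⊤ : Measure α) (Ioi u) = a₁ * μ₁ (Ioi u) + b₁ := fun u hu => by
    rw [Measure.add_apply, Measure.smul_apply, Measure.smul_apply,
      Measure.dirac_apply_of_mem (show ⊤ ∈ Ioi u from hu.trans_le le_top), smul_eq_mul,
      smul_eq_mul, mul_one]
  rw [Measure.restrict_add, Measure.restrict_smul, Measure.restrict_smul,
    restrict_dirac' measurableSet_Iio, if_neg (show ⊤ ∉ Iio s from not_top_lt), smul_zero, add_zero,
    lintegral_smul_measure, setLIntegral_congr_fun measurableSet_Iio hinner,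
    lintegral_add_right _ measurable_const, lintegral_const_mul' _ _ ha₁, setLIntegral_const]
  ring

end

theorem setLIntegral_measure_Ioi_ne_top {α : Type*} [MeasurableSpace α] [Preorder α]
    (μ ν : Measure α) [IsFiniteMeasure μ] [IsFiniteMeasure ν] (s : Set α) :
    ∫⁻ u in s, ν (Ioi u) ∂μ ≠ ∞ := by
  refine (IsFiniteMeasure.lintegral_lt_top_of_bounded_to_ennreal _ ⟨(ν univ).toNNReal, ?_⟩).ne
  exact fun u =>
    (measure_mono (subset_univ _)).trans (ENNReal.coe_toNNReal (measure_ne_top ν univ)).ge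

section

variable {α : Type*} [MeasurableSpace α] [LinearOrder α] [TopologicalSpace α]
  [OrderClosedTopology α] [BorelSpace α]

theorem measurable_measure_Ioi (ν : Measure α) : Measurable fun u => ν (Ioi u) :=
  Antitone.measurable fun _ _ huv => measure_mono (Ioi_subset_Ioi huv)

theorem setIntegral_Iic_measure_Ioi (μ ν : Measure α) [NullSingletonClass μ] [IsFiniteMeasure ν]
    (s : α) : ∫ u in Iic s, (ν (Ioi u)).toReal ∂μ = (∫⁻ u in Iio s, ν (Ioi u) ∂μ).toReal := by
  rw [← setIntegral_congr_set (Iio_ae_eq_Iic (μ := μ))]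
  exact integral_toReal (measurable_measure_Ioi ν).aemeasurable
    (ae_of_all _ fun _ => measure_lt_top ν _)

theorem measure_le_eq_mul_measure_Iio [OrderTop α] {Ω : Type*} [MeasurableSpace Ω]
    {P : Measure Ω} {T : Ω → α} {μ : Measure α} [NullSingletonClass μ] {a : ℝ≥0∞}
    (hlaw : ∀ A : Set α, MeasurableSet A → ⊤ ∉ A → P (T ⁻¹' A) = a * μ A) {s : α} (hs : s ≠ ⊤) :
    P {ω | T ω ≤ s} = a * μ (Iio s) := by
  rw [measure_congr (Iio_ae_eq_Iic (μ := μ))]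
  exact hlaw _ measurableSet_Iic fun h => hs (top_le_iff.mp h)

end

/-- **Probabilistic representation of the susceptible tau process.** For `ℓ = 0,1`
let `η_ℓ ∈ [0,1)` and `μ_ℓ` be an atomless Borel probability measure on `[0,∞)`
(modelled on `[0,∞]` with `μ_ℓ {∞} = 0`); set `ν_ℓ = (1 − η_ℓ)μ_ℓ` and
`S_{a,ℓ}(u) = μ_ℓ((u,∞))`. Let `T_0, T_1 : Ω → [0,∞]` be independent with
`P(T_ℓ ∈ A) = ν_ℓ(A)` for Borel `A ⊆ [0,∞)` and `P(T_ℓ = ∞) = η_ℓ`. Then for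
every `t ≥ 0`, with `F_ℓ(t) = P(T_ℓ ≤ t)`,
`τ_a(t) = ∫_{[0,t]} S_{a,1} dμ_0 − ∫_{[0,t]} S_{a,0} dμ_1
  = [(P(T_0 < min(T_1,t)) − η_1 F_0(t)) − (P(T_1 < min(T_0,t)) − η_0 F_1(t))]
      / [(1 − η_0)(1 − η_1)]`. -/
theorem susceptible_tau_probabilistic_representation
    {Ω : Type*} [MeasureSpace Ω] [IsProbabilityMeasure (ℙ : Measure Ω)]
    (η0 η1 : ℝ) (hη0 : 0 ≤ η0) (hη0' : η0 < 1) (hη1 : 0 ≤ η1) (hη1' : η1 < 1)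
    (μ0 μ1 : Measure ℝ≥0∞) [IsProbabilityMeasure μ0] [IsProbabilityMeasure μ1]
    [NullSingletonClass μ0] [NullSingletonClass μ1] (htop0 : μ0 {⊤} = 0) (htop1 : μ1 {⊤} = 0)
    (T0 T1 : Ω → ℝ≥0∞) (hT0 : Measurable T0) (hT1 : Measurable T1)
    (hindep : IndepFun T0 T1 ℙ)
    (hlaw0 : ∀ A : Set ℝ≥0∞, MeasurableSet A → ⊤ ∉ A →
      ℙ (T0 ⁻¹' A) = ENNReal.ofReal (1 - η0) * μ0 A)
    (hlaw1 : ∀ A : Set ℝ≥0∞, MeasurableSet A → ⊤ ∉ A →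
      ℙ (T1 ⁻¹' A) = ENNReal.ofReal (1 - η1) * μ1 A)
    (htail0 : ℙ {ω | T0 ω = ⊤} = ENNReal.ofReal η0)
    (htail1 : ℙ {ω | T1 ω = ⊤} = ENNReal.ofReal η1) :
    ∀ t : ℝ, 0 ≤ t →
      (∫ u in Set.Icc 0 (ENNReal.ofReal t), (μ1 (Set.Ioi u)).toReal ∂μ0)
        - (∫ u in Set.Icc 0 (ENNReal.ofReal t), (μ0 (Set.Ioi u)).toReal ∂μ1)
      = (((ℙ {ω | T0 ω < min (T1 ω) (ENNReal.ofReal t)}).toReal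
            - η1 * (ℙ {ω | T0 ω ≤ ENNReal.ofReal t}).toReal)
          - ((ℙ {ω | T1 ω < min (T0 ω) (ENNReal.ofReal t)}).toReal
            - η0 * (ℙ {ω | T1 ω ≤ ENNReal.ofReal t}).toReal))
        / ((1 - η0) * (1 - η1)) := by
  intro t _
  set s := ENNReal.ofReal t
  have hs : s ≠ ∞ := ENNReal.ofReal_ne_top
  have hmap0 := map_eq_smul_add_smul_dirac hT0 htop0 hlaw0 htail0
  have hmap1 := map_eq_smul_add_smul_dirac hT1 htop1 hlaw1 htail1
  have hP01 := measure_lt_min_eq_setLIntegral hT0 hT1 hindep s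
  have hP10 := measure_lt_min_eq_setLIntegral hT1 hT0 hindep.symm s
  rw [hmap0, hmap1, setLIntegral_Iio_smul_add_smul_dirac_top _ _ ENNReal.ofReal_ne_top]
    at hP01 hP10
  rw [show Icc (0 : ℝ≥0∞) s = Iic s from Icc_bot, setIntegral_Iic_measure_Ioi,
    setIntegral_Iic_measure_Ioi, hP01, hP10, measure_le_eq_mul_measure_Iio hlaw0 hs,
    measure_le_eq_mul_measure_Iio hlaw1 hs]
  have hA01 := setLIntegral_measure_Ioi_ne_top μ0 μ1 (Iio s)
  have hA10 := setLIntegral_measure_Ioi_ne_top μ1 μ0 (Iio s)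
  rw [ENNReal.toReal_add (by finiteness) (by finiteness),
    ENNReal.toReal_add (by finiteness) (by finiteness)]
  simp only [ENNReal.toReal_mul, ENNReal.toReal_ofReal hη0, ENNReal.toReal_ofReal hη1,
    ENNReal.toReal_ofReal (sub_nonneg.mpr hη0'.le), ENNReal.toReal_ofReal (sub_nonneg.mpr hη1'.le)]
  rw [eq_div_iff (mul_ne_zero (sub_ne_zero.mpr hη0'.ne') (sub_ne_zero.mpr hη1'.ne'))]
  ring
end
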